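/- arXiv:1101.4241 — 5 statements merged into one kernel-verified Lean document; each statement's English description precedes it below -/
import Mathlib

section
/- Let Λ be an artin algebra and let 0 → N →j→ E →π→ M → 0 be an almost split sequence in mod Λ. Then the sequence 0 → (N → 0) → (π : E → M) → (1_M : M → M) → 0 in maps(mod Λ), whose first morphism has components j : N → E and 0 : 0 → M, and whose second morphism has components π : E → M and 1_M : M → M, is an almost split sequence in maps(mod Λ). -/
open CategoryTheory CategoryTheory.Limits

universe u

/-- An object of a category is indecomposable if it is nonzero and in any direct sum
decomposition (encoded as a compatible product-and-coproduct diagram) one of the two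
summands is zero. -/
def IsIndecomposable {C : Type*} [Category C] (X : C) : Prop :=
  ¬ IsZero X ∧
    ∀ ⦃Y Z : C⦄ (p : X ⟶ Y) (q : X ⟶ Z) (i : Y ⟶ X) (j : Z ⟶ X),
      i ≫ p = 𝟙 Y → j ≫ q = 𝟙 Z →
      Nonempty (IsLimit (BinaryFan.mk p q)) →
      Nonempty (IsColimit (BinaryCofan.mk i j)) →
      IsZero Y ∨ IsZero Z

/-- The categorical conditions for a short exact sequence `0 → N → E → M → 0` to be
almost split: it does not split (`β` is not a split epimorphism), both ends are
indecomposable, and every morphism to `M` which is not a split epimorphism factors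
through `β`. -/
def IsAlmostSplitSeq {C : Type*} [Category C] {N E M : C} (_α : N ⟶ E) (β : E ⟶ M) : Prop :=
  ¬ IsSplitEpi β ∧ IsIndecomposable N ∧ IsIndecomposable M ∧
    ∀ ⦃X : C⦄ (u : X ⟶ M), ¬ IsSplitEpi u → ∃ v : X ⟶ E, v ≫ β = u

/-- Short exactness of `0 → N → E → M → 0` in `mod Λ`, stated concretely. -/
def IsShortExactSeq {Λ : Type u} [Ring Λ] {N E M : FGModuleCat Λ}
    (α : N ⟶ E) (β : E ⟶ M) : Prop :=
  Function.Injective ⇑α ∧ Function.Exact ⇑α ⇑β ∧ Function.Surjective ⇑β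

/-- Componentwise short exactness of a sequence in `maps (mod Λ)`. -/
def IsShortExactSeqMaps {Λ : Type u} [Ring Λ] {X Y Z : Arrow (FGModuleCat Λ)}
    (α : X ⟶ Y) (β : Y ⟶ Z) : Prop :=
  IsShortExactSeq α.left β.left ∧ IsShortExactSeq α.right β.right

/-- An almost split sequence in `maps (mod Λ)`: a componentwise short exact sequence
which is almost split. -/
def IsAlmostSplitSeqMaps {Λ : Type u} [Ring Λ] {X Y Z : Arrow (FGModuleCat Λ)}
    (α : X ⟶ Y) (β : Y ⟶ Z) : Prop :=
  IsShortExactSeqMaps α β ∧ IsAlmostSplitSeq α β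

/-!
The source functor `Arrow C ⥤ C` has the left adjoint `X ↦ 𝟙 X` and, when `C` has a terminal
object, the right adjoint `X ↦ (X ⟶ ⊤_ C)`; so it preserves binary products, binary coproducts
and zero objects, and a direct sum decomposition of `N → 0` or of `𝟙 M` restricts to one of `N`,
resp. `M`. The summand whose source vanishes is then zero, because its target is a retract of `0`,
resp. isomorphic to its source. Since `(π, 𝟙 M)` has invertible second component, a morphism
`u` into `𝟙 M` is a split epimorphism as soon as `u.left` is, and any factorization of `u.left`
through `π` extends to a factorization of `u` through `(π, 𝟙 M)`.
-/

namespace CategoryTheory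

lemma Retract.isZero {C : Type*} [Category C] {X Y : C} (h : Retract X Y) (hY : IsZero Y) :
    IsZero X where
  unique_to A := ⟨⟨⟨h.i ≫ hY.to_ A⟩, fun a => by
    rw [← Category.id_comp a, ← h.retract, Category.assoc, hY.eq_of_src (h.r ≫ a) (hY.to_ A)]
    rfl⟩⟩
  unique_from A := ⟨⟨⟨hY.from_ A ≫ h.r⟩, fun a => by
    rw [← Category.comp_id a, ← h.retract, ← Category.assoc, hY.eq_of_tgt (a ≫ h.i) (hY.from_ A)]
    rfl⟩⟩

namespace Arrow

variable {C : Type*} [Category C]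

def mkId : C ⥤ Arrow C where
  obj X := Arrow.mk (𝟙 X)
  map f := Arrow.homMk f f

noncomputable def toTerminal [HasTerminal C] : C ⥤ Arrow C where
  obj X := Arrow.mk (terminal.from X)
  map f := Arrow.homMk f (𝟙 _)

def mkIdAdjLeftFunc : (mkId : C ⥤ Arrow C) ⊣ leftFunc :=
  Adjunction.mkOfHomEquiv
    { homEquiv X Y :=
        { toFun f := f.left
          invFun g := Arrow.homMk (f := Arrow.mk (𝟙 X)) g (g ≫ Y.hom) (Category.id_comp _).symm
          left_inv f := by ext; exacts [rfl, (Arrow.w f).trans (Category.id_comp _)]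
          right_inv g := rfl }
      homEquiv_naturality_left_symm f g := by ext; exacts [rfl, Category.assoc _ _ _] }

noncomputable def leftFuncAdjToTerminal [HasTerminal C] :
    leftFunc ⊣ (toTerminal : C ⥤ Arrow C) :=
  Adjunction.mkOfHomEquiv
    { homEquiv Y X :=
        { toFun g := Arrow.homMk g (terminal.from _) (terminal.hom_ext _ _)
          invFun f := f.left
          left_inv g := rfl
          right_inv f := by ext; exacts [rfl, terminal.hom_ext _ _] }
      homEquiv_naturality_right f g := by ext; exacts [rfl, terminal.hom_ext _ _] }

instance : (leftFunc : Arrow C ⥤ C).IsRightAdjoint := mkIdAdjLeftFunc.isRightAdjoint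
instance [HasTerminal C] : (leftFunc : Arrow C ⥤ C).IsLeftAdjoint :=
  leftFuncAdjToTerminal.isLeftAdjoint

lemma isZero_left_of_isZero [HasTerminal C] {W : Arrow C} (hW : IsZero W) : IsZero W.left where
  unique_to A := (hW.unique_to (toTerminal.obj A)).map fun u =>
    @Equiv.unique _ _ u (leftFuncAdjToTerminal.homEquiv W A)
  unique_from A := (hW.unique_from (mkId.obj A)).map fun u =>
    @Equiv.unique _ _ u (mkIdAdjLeftFunc.homEquiv A W).symm

lemma isZero_of_isZero_left_of_isZero_right {W : Arrow C} (hl : IsZero W.left)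
    (hr : IsZero W.right) : IsZero W where
  unique_to A := ⟨⟨⟨Arrow.homMk (hl.to_ A.left) (hr.to_ A.right) (hl.eq_of_src _ _)⟩,
    fun _ => Arrow.hom_ext _ _ (hl.eq_of_src _ _) (hr.eq_of_src _ _)⟩⟩
  unique_from A := ⟨⟨⟨Arrow.homMk (hl.from_ A.left) (hr.from_ A.right) (hr.eq_of_tgt _ _)⟩,
    fun _ => Arrow.hom_ext _ _ (hl.eq_of_tgt _ _) (hr.eq_of_tgt _ _)⟩⟩

theorem isIndecomposable_of_isIndecomposable_left [HasTerminal C] {X : Arrow C}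
    (hX : IsIndecomposable X.left)
    (hsummand : ∀ Y : Arrow C, Retract Y X → IsZero Y.left → IsZero Y.right) :
    IsIndecomposable X := by
  refine ⟨fun h => hX.1 (isZero_left_of_isZero h), ?_⟩
  rintro Y Y' p q i j hip hjq ⟨hlim⟩ ⟨hcolim⟩
  have hleft := hX.2 p.left q.left i.left j.left (leftFunc.congr_map hip)
    (leftFunc.congr_map hjq) ⟨mapIsLimitOfPreservesOfIsLimit leftFunc p q hlim⟩
    ⟨mapIsColimitOfPreservesOfIsColimit leftFunc i j hcolim⟩
  rcases hleft with hY | hY'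
  · exact Or.inl (isZero_of_isZero_left_of_isZero_right hY (hsummand Y ⟨i, p, hip⟩ hY))
  · exact Or.inr (isZero_of_isZero_left_of_isZero_right hY' (hsummand Y' ⟨j, q, hjq⟩ hY'))

theorem isIndecomposable_of_isZero_right [HasTerminal C] {X : Arrow C}
    (hX : IsIndecomposable X.left) (hr : IsZero X.right) : IsIndecomposable X :=
  isIndecomposable_of_isIndecomposable_left hX fun _ h _ => (h.map rightFunc).isZero hr

theorem isIndecomposable_of_isIso_hom [HasTerminal C] {X : Arrow C}
    (hX : IsIndecomposable X.left) [IsIso X.hom] : IsIndecomposable X :=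
  isIndecomposable_of_isIndecomposable_left hX fun Y h hl =>
    have : IsIso Y.hom := (MorphismProperty.isomorphisms C).of_retract h ‹IsIso X.hom›
    hl.of_iso (asIso Y.hom).symm

lemma isSplitEpi_of_isSplitEpi_left {W Z : Arrow C} [IsIso Z.hom] (u : W ⟶ Z)
    [IsSplitEpi u.left] : IsSplitEpi u :=
  IsSplitEpi.mk' ⟨Arrow.homMk (section_ u.left) (inv Z.hom ≫ section_ u.left ≫ W.hom)
    (by simp), Arrow.hom_ext _ _ (by simp) (by
      simp only [Arrow.comp_right, Arrow.homMk_right, Arrow.id_right, Category.assoc,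
        ← Arrow.w u, IsSplitEpi.id_assoc, IsIso.inv_hom_id])⟩

lemma exists_comp_eq_of_comp_left_eq {W Y Z : Arrow C} (β : Y ⟶ Z) [IsIso β.right]
    (u : W ⟶ Z) (v : W.left ⟶ Y.left) (hv : v ≫ β.left = u.left) : ∃ w : W ⟶ Y, w ≫ β = u :=
  ⟨Arrow.homMk v (u.right ≫ inv β.right) (by
    rw [← cancel_mono β.right, Category.assoc, ← Arrow.w β, reassoc_of% hv, Arrow.w u]; simp),
    by ext; exacts [hv, by simp]⟩

end Arrow

end CategoryTheory

open Arrow in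
theorem IsAlmostSplitSeq.arrow {C : Type*} [Category C] {X Y Z : Arrow C} {α : X ⟶ Y}
    {β : Y ⟶ Z} (h : IsAlmostSplitSeq α.left β.left) (hX : IsZero X.right)
    [hZ : IsIso Z.hom] [hβ : IsIso β.right] : IsAlmostSplitSeq α β := by
  have := hX.isTerminal.hasTerminal
  obtain ⟨hsplit, hN, hM, hlift⟩ := h
  refine ⟨fun _ => hsplit (inferInstanceAs (IsSplitEpi (leftFunc.map β))),
    isIndecomposable_of_isZero_right hN hX, isIndecomposable_of_isIso_hom hM, fun W u hu => ?_⟩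
  obtain ⟨v, hv⟩ := hlift u.left fun _ => hu (isSplitEpi_of_isSplitEpi_left u)
  exact exists_comp_eq_of_comp_left_eq β u v hv

theorem isShortExactSeq_id_of_isZero {Λ : Type u} [Ring Λ] {Z M : FGModuleCat Λ} (hZ : IsZero Z)
    (g : Z ⟶ M) : IsShortExactSeq g (𝟙 M) := by
  have : Subsingleton Z :=
    ModuleCat.isZero_iff_subsingleton.mp ((forget₂ (FGModuleCat Λ) (ModuleCat Λ)).map_isZero hZ)
  refine ⟨Function.injective_of_subsingleton _, fun y => ⟨fun hy => ⟨0, ?_⟩, ?_⟩,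
    Function.surjective_id⟩
  · simpa using hy.symm
  · rintro ⟨x, rfl⟩
    simp [Subsingleton.elim x 0]

/-- Let `Λ` be an artin algebra and `0 → N →j→ E →π→ M → 0` an almost
split sequence in `mod Λ`.  Then `0 → (N → 0) → (π : E → M) → (1_M : M → M) → 0`, whose
first morphism has components `j` and `0` and whose second morphism has components `π`
and `1_M`, is an almost split sequence in `maps (mod Λ)`. -/
theorem almostSplit_maps_of_almostSplit_right
    {Λ : Type u} [Ring Λ]
    {N E M : FGModuleCat Λ} (j : N ⟶ E) (π : E ⟶ M)
    (hw : j ≫ π = 0) (hex : IsShortExactSeq j π) (has : IsAlmostSplitSeq j π)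
    (Z : FGModuleCat Λ) (hZ : IsZero Z) :
    IsAlmostSplitSeqMaps
      (X := Arrow.mk (0 : N ⟶ Z)) (Y := Arrow.mk π) (Z := Arrow.mk (𝟙 M))
      (Arrow.homMk (u := j) (v := (0 : Z ⟶ M)) (by simp [hw]))
      (Arrow.homMk (u := π) (v := 𝟙 M) (by simp)) :=
  ⟨⟨hex, isShortExactSeq_id_of_isZero hZ 0⟩, has.arrow hZ (hZ := .id M) (hβ := .id M)⟩
end

section
/- Let Λ be an artin algebra and let 𝒞 be a full subcategory of maps(mod Λ) closed under isomorphisms. If 𝒞 is contravariantly finite in maps(mod Λ), then the full subcategory Φ(𝒞) of mod(mod Λ) consisting of the functors isomorphic to Φ(Z) for some Z in 𝒞 is contravariantly finite in mod(mod Λ). -/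
open CategoryTheory CategoryTheory.Limits

universe u

/-- The functor `Φ : maps (mod Λ) → mod (mod Λ)` on objects: it sends `f : M₁ → M₂` to
`Coker((−,f) : (−,M₁) → (−,M₂))`. -/
noncomputable def PhiObj {Λ : Type u} [Ring Λ] (a : Arrow (FGModuleCat Λ)) :
    (FGModuleCat Λ)ᵒᵖ ⥤ AddCommGrpCat.{u} :=
  cokernel (preadditiveYoneda.map a.hom)

/-- A functor `F : (mod Λ)ᵒᵖ → Ab` is finitely presented if there is an exact sequence
`(−,M₁) → (−,M₀) → F → 0`. -/
def IsFinitelyPresentedFunctor {Λ : Type u} [Ring Λ]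
    (F : (FGModuleCat Λ)ᵒᵖ ⥤ AddCommGrpCat.{u}) : Prop :=
  ∃ (M₁ M₀ : FGModuleCat Λ) (f : M₁ ⟶ M₀) (p : preadditiveYoneda.obj M₀ ⟶ F)
    (w : preadditiveYoneda.map f ≫ p = 0),
    Epi p ∧ (ShortComplex.mk (preadditiveYoneda.map f) p w).Exact

/-- The full subcategory `Φ(𝒞)`: objects isomorphic to `Φ(Z)` for some `Z ∈ 𝒞`. -/
noncomputable def PhiImage {Λ : Type u} [Ring Λ] (𝒞 : Set (Arrow (FGModuleCat Λ))) :
    Set ((FGModuleCat Λ)ᵒᵖ ⥤ AddCommGrpCat.{u}) :=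
  {F | ∃ Z ∈ 𝒞, Nonempty (PhiObj Z ≅ F)}

/-- `f : Z → M` is a right `𝒳`-approximation of `M`. -/
def IsRightApproximation {C : Type*} [Category C] (𝒳 : Set C) {Z M : C} (f : Z ⟶ M) : Prop :=
  Z ∈ 𝒳 ∧ ∀ ⦃Z' : C⦄, Z' ∈ 𝒳 → ∀ u : Z' ⟶ M, ∃ v : Z' ⟶ Z, v ≫ f = u

/-- `M` has a right `𝒳`-approximation. -/
def HasRightApproximation {C : Type*} [Category C] (𝒳 : Set C) (M : C) : Prop :=
  ∃ (Z : C) (f : Z ⟶ M), IsRightApproximation 𝒳 f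

/-!
For arrows `f : X_f → Y_f` and `g : X_g → Y_g`, `Φ` is full: a map `Φ(g) → Φ(f)` composed
with `(−, Y_g) → Φ(g)` lifts along the epimorphism `(−, Y_f) → Φ(f)`, by Yoneda, to `(−, m)`
for some `m : Y_g → Y_f`; then `(−, g ≫ m)` dies in `Φ(f)`, so by exactness of
`(−, X_f) → (−, Y_f) → Φ(f)` at `X_g` the composite `g ≫ m` factors through `f`, giving a
morphism `g → f` of arrows. A full functor sends a right `𝒞`-approximation of `f` to a right
`Φ(𝒞)`-approximation of `Φ(f)`, and every finitely presented functor is isomorphic to some `Φ(f)`.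
-/

section Approximation

variable {A B : Type*} [Category A] [Category B]

theorem HasRightApproximation.of_iso {𝒳 : Set B} {M N : B} (h : HasRightApproximation 𝒳 M)
    (e : M ≅ N) : HasRightApproximation 𝒳 N := by
  obtain ⟨Z, f, hZ, hf⟩ := h
  refine ⟨Z, f ≫ e.hom, hZ, fun Z' hZ' u => ?_⟩
  obtain ⟨v, hv⟩ := hf hZ' (u ≫ e.inv)
  exact ⟨v, by rw [← Category.assoc, hv, Category.assoc, e.inv_hom_id, Category.comp_id]⟩

theorem CategoryTheory.Functor.hasRightApproximation_map_of_full (Φ : A ⥤ B) [Φ.Full]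
    {𝒞 : Set A} {M : A} (h : HasRightApproximation 𝒞 M) :
    HasRightApproximation {F | ∃ Z ∈ 𝒞, Nonempty (Φ.obj Z ≅ F)} (Φ.obj M) := by
  obtain ⟨Z, g, hZ, hg⟩ := h
  refine ⟨Φ.obj Z, Φ.map g, ⟨Z, hZ, ⟨Iso.refl _⟩⟩, ?_⟩
  rintro G ⟨Z', hZ', ⟨φ⟩⟩ u
  obtain ⟨w, hw⟩ := Φ.map_surjective (φ.hom ≫ u)
  obtain ⟨v, rfl⟩ := hg hZ' w
  exact ⟨φ.inv ≫ Φ.map v, by rw [Category.assoc, ← Φ.map_comp, hw, φ.inv_hom_id_assoc]⟩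

end Approximation

namespace CategoryTheory

open Opposite

section PreadditiveYoneda

universe v

variable {C : Type*} [Category.{v} C] [Preadditive C]

theorem preadditiveYoneda_hom_ext {X : C} {F : Cᵒᵖ ⥤ AddCommGrpCat}
    {η ν : preadditiveYoneda.obj X ⟶ F} (h : η.app (op X) (𝟙 X) = ν.app (op X) (𝟙 X)) :
    η = ν := by
  ext W x
  have hη := NatTrans.naturality_apply η x.op (𝟙 X)
  have hν := NatTrans.naturality_apply ν x.op (𝟙 X)
  have hx : ((preadditiveYoneda.obj X).map x.op) (𝟙 X) = x := Category.comp_id x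
  rw [hx] at hη hν
  exact (hη.trans (congrArg _ h)).trans hν.symm

theorem exists_preadditiveYoneda_map_comp_eq {X Y : C} {F : Cᵒᵖ ⥤ AddCommGrpCat}
    (p : preadditiveYoneda.obj Y ⟶ F) [Epi p] (η : preadditiveYoneda.obj X ⟶ F) :
    ∃ m : X ⟶ Y, preadditiveYoneda.map m ≫ p = η := by
  obtain ⟨m, hm⟩ := (AddCommGrpCat.epi_iff_surjective (p.app (op X))).1 inferInstance
    (η.app (op X) (𝟙 X))
  exact ⟨m, preadditiveYoneda_hom_ext ((congrArg (p.app (op X)) (Category.id_comp m)).trans hm)⟩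

theorem exists_comp_eq_of_preadditiveYoneda_map_comp_cokernel_π_eq_zero {X Y Z : C}
    (f : X ⟶ Y) {k : Z ⟶ Y}
    (hk : preadditiveYoneda.map k ≫ cokernel.π (preadditiveYoneda.map f) = 0) :
    ∃ q : Z ⟶ X, q ≫ f = k := by
  have hex := (ShortComplex.exact_of_g_is_cokernel (ShortComplex.mk _ _ (cokernel.condition _))
    (cokernelIsCokernel (preadditiveYoneda.map f))).map
      ((evaluation Cᵒᵖ AddCommGrpCat).obj (op Z))
  rw [ShortComplex.ab_exact_iff] at hex
  have hk' : (cokernel.π (preadditiveYoneda.map f)).app (op Z) (𝟙 Z ≫ k) = 0 :=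
    congrArg (fun η => η.app (op Z) (𝟙 Z)) hk
  exact hex k (by rwa [Category.id_comp] at hk')

/-- The functor `Φ : maps C → mod C`; on objects it is `PhiObj`. -/
noncomputable def preadditiveYonedaCoker : Arrow C ⥤ Cᵒᵖ ⥤ AddCommGrpCat :=
  preadditiveYoneda.mapArrow ⋙ coker _

instance : (preadditiveYonedaCoker (C := C)).Full where
  map_surjective {Z M}
      (u : cokernel (preadditiveYoneda.map Z.hom) ⟶ cokernel (preadditiveYoneda.map M.hom)) := by
    obtain ⟨m, hm⟩ := exists_preadditiveYoneda_map_comp_eq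
      (cokernel.π (preadditiveYoneda.map M.hom)) (cokernel.π (preadditiveYoneda.map Z.hom) ≫ u)
    have hk :
        preadditiveYoneda.map (Z.hom ≫ m) ≫ cokernel.π (preadditiveYoneda.map M.hom) = 0 := by
      rw [preadditiveYoneda.map_comp, Category.assoc, hm, ← Category.assoc,
        cokernel.condition, zero_comp]
    obtain ⟨q, hq⟩ := exists_comp_eq_of_preadditiveYoneda_map_comp_cokernel_π_eq_zero M.hom hk
    refine ⟨Arrow.homMk q m hq, ?_⟩
    change cokernel.desc _ _ _ = u
    rw [← cancel_epi (cokernel.π (preadditiveYoneda.map Z.hom))]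
    exact (cokernel.π_desc _ _ _).trans hm

end PreadditiveYoneda

end CategoryTheory

theorem IsFinitelyPresentedFunctor.exists_phiObj_iso {Λ : Type u} [Ring Λ]
    {F : (FGModuleCat Λ)ᵒᵖ ⥤ AddCommGrpCat.{u}} (hF : IsFinitelyPresentedFunctor F) :
    ∃ a : Arrow (FGModuleCat Λ), Nonempty (PhiObj a ≅ F) := by
  obtain ⟨M₁, M₀, f, p, w, hp, hex⟩ := hF
  exact ⟨Arrow.mk f, ⟨(colimit.isColimit _).coconePointUniqueUpToIso hex.gIsCokernel⟩⟩

theorem phiImage_contravariantlyFinite_general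
    {Λ : Type u} [Ring Λ]
    (𝒞 : Set (Arrow (FGModuleCat Λ)))
    (hcf : ∀ M : Arrow (FGModuleCat Λ), HasRightApproximation 𝒞 M) :
    ∀ F : (FGModuleCat Λ)ᵒᵖ ⥤ AddCommGrpCat.{u}, IsFinitelyPresentedFunctor F →
      HasRightApproximation (PhiImage 𝒞) F := by
  intro F hF
  obtain ⟨a, ⟨e⟩⟩ := hF.exists_phiObj_iso
  exact (preadditiveYonedaCoker.hasRightApproximation_map_of_full (hcf a)).of_iso e

/-- Let `Λ` be an artin algebra and `𝒞` a full subcategory of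
`maps (mod Λ)` closed under isomorphisms.  If `𝒞` is contravariantly finite in
`maps (mod Λ)`, then `Φ(𝒞)` is contravariantly finite in `mod (mod Λ)`. -/
theorem phiImage_contravariantlyFinite
    {R : Type u} [CommRing R] [IsArtinianRing R]
    {Λ : Type u} [Ring Λ] [Algebra R Λ] [Module.Finite R Λ]
    (𝒞 : Set (Arrow (FGModuleCat Λ)))
    (hiso : ∀ ⦃X Y : Arrow (FGModuleCat Λ)⦄, (X ≅ Y) → X ∈ 𝒞 → Y ∈ 𝒞)
    (hcf : ∀ M : Arrow (FGModuleCat Λ), HasRightApproximation 𝒞 M) :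
    ∀ F : (FGModuleCat Λ)ᵒᵖ ⥤ AddCommGrpCat.{u}, IsFinitelyPresentedFunctor F →
      HasRightApproximation (PhiImage 𝒞) F :=
  phiImage_contravariantlyFinite_general 𝒞 hcf
end

section
/- Let Λ be an artin algebra and let 𝒞 be a full subcategory of maps(mod Λ), closed under isomorphisms and finite direct sums, that contains all objects of the form (0 → M) and (1_M : M → M) for M in mod Λ. If the full subcategory Φ^op(𝒞) of mod((mod Λ)^op), consisting of covariant functors isomorphic to Φ^op(Z) for some Z in 𝒞, is contravariantly finite in mod((mod Λ)^op), then 𝒞 is covariantly finite in maps(mod Λ). -/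
open CategoryTheory CategoryTheory.Limits Opposite

universe u

/-- The functor `Φᵒᵖ : maps (mod Λ) → mod ((mod Λ)ᵒᵖ)` on objects: it sends
`f : A₁ → A₀` to `Coker((f,−) : (A₀,−) → (A₁,−))`. -/
noncomputable def PhiOpObj {Λ : Type u} [Ring Λ] (a : Arrow (FGModuleCat Λ)) :
    FGModuleCat Λ ⥤ AddCommGrpCat.{u} :=
  cokernel (preadditiveCoyoneda.map a.hom.op)

/-- A covariant functor `G : mod Λ → Ab` is finitely presented if there is an exact
sequence `(M₀,−) → (M₁,−) → G → 0`. -/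
def IsFinitelyPresentedCovariantFunctor {Λ : Type u} [Ring Λ]
    (G : FGModuleCat Λ ⥤ AddCommGrpCat.{u}) : Prop :=
  ∃ (M₁ M₀ : FGModuleCat Λ) (f : M₁ ⟶ M₀) (p : preadditiveCoyoneda.obj (op M₁) ⟶ G)
    (w : preadditiveCoyoneda.map f.op ≫ p = 0),
    Epi p ∧ (ShortComplex.mk (preadditiveCoyoneda.map f.op) p w).Exact

/-- The full subcategory `Φᵒᵖ(𝒞)`: objects isomorphic to `Φᵒᵖ(Z)` for some `Z ∈ 𝒞`. -/
noncomputable def PhiOpImage {Λ : Type u} [Ring Λ] (𝒞 : Set (Arrow (FGModuleCat Λ))) :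
    Set (FGModuleCat Λ ⥤ AddCommGrpCat.{u}) :=
  {G | ∃ Z ∈ 𝒞, Nonempty (PhiOpObj Z ≅ G)}

/-- `f : M → Z` is a left `𝒳`-approximation of `M`. -/
def IsLeftApproximation {C : Type*} [Category C] (𝒳 : Set C) {M Z : C} (f : M ⟶ Z) : Prop :=
  Z ∈ 𝒳 ∧ ∀ ⦃Z' : C⦄, Z' ∈ 𝒳 → ∀ u : M ⟶ Z', ∃ v : Z ⟶ Z', f ≫ v = u

/-- `M` has a left `𝒳`-approximation. -/
def HasLeftApproximation {C : Type*} [Category C] (𝒳 : Set C) (M : C) : Prop :=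
  ∃ (Z : C) (f : M ⟶ Z), IsLeftApproximation 𝒳 f

/-- A set of objects is closed under finite direct sums if it contains any object `W`
which is simultaneously a product and a coproduct (in a compatible way) of two of its
members. -/
def ClosedUnderDirectSums {C : Type*} [Category C] (𝒳 : Set C) : Prop :=
  ∀ ⦃X Y W : C⦄, X ∈ 𝒳 → Y ∈ 𝒳 →
    ∀ (p : W ⟶ X) (q : W ⟶ Y) (i : X ⟶ W) (j : Y ⟶ W),
      i ≫ p = 𝟙 X → j ≫ q = 𝟙 Y →
      Nonempty (IsLimit (BinaryFan.mk p q)) →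
      Nonempty (IsColimit (BinaryCofan.mk i j)) →
      W ∈ 𝒳

/-!
Write `X : X₁ → X₀`. Morphisms out of the representable functor `(X₁, −)` are determined by the
image of `𝟙`, so every morphism `Φᵒᵖ(Z) → Φᵒᵖ(X)` is `Φᵒᵖ(φ)` for a morphism of arrows
`φ : X → Z`, and `Φᵒᵖ(g) = Φᵒᵖ(g')` exactly when `g₁ - g'₁` factors through `X`. Lifting a right
`Φᵒᵖ(𝒞)`-approximation of `Φᵒᵖ(X)` therefore gives `φ : X → Z` with `Z ∈ 𝒞` through which every
`g : X → Z'` with `Z' ∈ 𝒞` factors up to an error `g₁ = φ₁ w₁ + X t`. Enlarging `Z` to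
`Z ⊕ (1 : X₀ → X₀) ⊕ (0 → Coker X)` absorbs the error: `t` is carried by the middle summand, and
what is left of `g₀` vanishes on the image of `X` and so factors through `Coker X`.
-/

universe v w

namespace CategoryTheory.Arrow

section

variable {C : Type*} [Category C] [HasZeroMorphisms C] [HasBinaryBiproducts C]

noncomputable abbrev biprod (a b : Arrow C) : Arrow C :=
  Arrow.mk (Limits.biprod.map a.hom b.hom)

variable {a b : Arrow C}

@[simps!]
noncomputable def biprodLift {X : Arrow C} (f : X ⟶ a) (g : X ⟶ b) : X ⟶ biprod a b :=
  Arrow.homMk (biprod.lift f.left g.left) (biprod.lift f.right g.right)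
    (by apply biprod.hom_ext <;> simp [Arrow.biprod])

@[simps!]
noncomputable def biprodDesc {X : Arrow C} (f : a ⟶ X) (g : b ⟶ X) : biprod a b ⟶ X :=
  Arrow.homMk (biprod.desc f.left g.left) (biprod.desc f.right g.right)
    (by apply biprod.hom_ext' <;> simp [Arrow.biprod])

noncomputable def biprodFst : biprod a b ⟶ a :=
  Arrow.homMk biprod.fst biprod.fst (by simp [Arrow.biprod])

noncomputable def biprodSnd : biprod a b ⟶ b :=
  Arrow.homMk biprod.snd biprod.snd (by simp [Arrow.biprod])

noncomputable def biprodInl : a ⟶ biprod a b :=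
  Arrow.homMk biprod.inl biprod.inl (by simp [Arrow.biprod])

noncomputable def biprodInr : b ⟶ biprod a b :=
  Arrow.homMk biprod.inr biprod.inr (by simp [Arrow.biprod])

noncomputable def isLimitBiprodFan :
    IsLimit (BinaryFan.mk (biprodFst (a := a) (b := b)) biprodSnd) :=
  BinaryFan.isLimitMk (fun s => biprodLift s.fst s.snd)
    (fun s => by ext <;> simp [biprodLift, biprodFst])
    (fun s => by ext <;> simp [biprodLift, biprodSnd])
    (fun s m h₁ h₂ => by
      ext <;> apply biprod.hom_ext <;> simp [← h₁, ← h₂, biprodLift, biprodFst, biprodSnd])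

noncomputable def isColimitBiprodCofan :
    IsColimit (BinaryCofan.mk (biprodInl (a := a) (b := b)) biprodInr) :=
  BinaryCofan.isColimitMk (fun s => biprodDesc s.inl s.inr)
    (fun s => by ext <;> simp [biprodDesc, biprodInl])
    (fun s => by ext <;> simp [biprodDesc, biprodInr])
    (fun s m h₁ h₂ => by
      ext <;> apply biprod.hom_ext' <;> simp [← h₁, ← h₂, biprodDesc, biprodInl, biprodInr])

theorem biprod_mem {𝒞 : Set (Arrow C)} (h𝒞 : ClosedUnderDirectSums 𝒞) (ha : a ∈ 𝒞) (hb : b ∈ 𝒞) :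
    biprod a b ∈ 𝒞 :=
  h𝒞 ha hb biprodFst biprodSnd biprodInl biprodInr (by ext <;> simp [biprodInl, biprodFst])
    (by ext <;> simp [biprodInr, biprodSnd]) ⟨isLimitBiprodFan⟩ ⟨isColimitBiprodCofan⟩

end

section

variable {C : Type*} [Category C] [Preadditive C] [HasBinaryBiproducts C] [HasCokernels C]
  [HasZeroObject C]

open ZeroObject

noncomputable abbrev leftApproxTarget (X Z : Arrow C) : Arrow C :=
  biprod Z (biprod (Arrow.mk (𝟙 X.right)) (Arrow.mk (0 : 0 ⟶ cokernel X.hom)))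

noncomputable def toLeftApproxTarget {X Z : Arrow C} (φ : X ⟶ Z) : X ⟶ leftApproxTarget X Z :=
  biprodLift φ (biprodLift (Arrow.homMk X.hom (𝟙 _)) (Arrow.homMk 0 (cokernel.π X.hom)))

theorem leftApproxTarget_mem {𝒞 : Set (Arrow C)} (hsum : ClosedUnderDirectSums 𝒞)
    (hzero : ∀ (M Z : C), IsZero Z → Arrow.mk (0 : Z ⟶ M) ∈ 𝒞)
    (hid : ∀ M : C, Arrow.mk (𝟙 M) ∈ 𝒞) (X : Arrow C) {Z : Arrow C} (hZ : Z ∈ 𝒞) :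
    leftApproxTarget X Z ∈ 𝒞 :=
  biprod_mem hsum hZ (biprod_mem hsum (hid _) (hzero _ _ (isZero_zero C)))

theorem exists_toLeftApproxTarget_comp_eq {X Z Z' : Arrow C} (φ : X ⟶ Z) (g : X ⟶ Z')
    (w : Z ⟶ Z') (t : X.right ⟶ Z'.left) (h : g.left = φ.left ≫ w.left + X.hom ≫ t) :
    ∃ v : leftApproxTarget X Z ⟶ Z', toLeftApproxTarget φ ≫ v = g := by
  have hδ : X.hom ≫ (g.right - φ.right ≫ w.right - t ≫ Z'.hom) = 0 := by
    simp only [Preadditive.comp_sub, ← Arrow.w_assoc, ← Arrow.w, h]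
    simp
  refine ⟨biprodDesc w (biprodDesc (Arrow.homMk t (t ≫ Z'.hom))
    (Arrow.homMk 0 (cokernel.desc _ _ hδ))), ?_⟩
  ext
  · simp [toLeftApproxTarget, h]
  · simp [toLeftApproxTarget]

theorem isLeftApproximation_toLeftApproxTarget {𝒞 : Set (Arrow C)}
    (hsum : ClosedUnderDirectSums 𝒞) (hzero : ∀ (M Z : C), IsZero Z → Arrow.mk (0 : Z ⟶ M) ∈ 𝒞)
    (hid : ∀ M : C, Arrow.mk (𝟙 M) ∈ 𝒞) {X Z : Arrow C} (hZ : Z ∈ 𝒞) (φ : X ⟶ Z)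
    (hφ : ∀ ⦃Z' : Arrow C⦄, Z' ∈ 𝒞 → ∀ g : X ⟶ Z',
      ∃ (w : Z ⟶ Z') (t : X.right ⟶ Z'.left), g.left = φ.left ≫ w.left + X.hom ≫ t) :
    IsLeftApproximation 𝒞 (toLeftApproxTarget φ) := by
  refine ⟨leftApproxTarget_mem hsum hzero hid X hZ, fun Z' hZ' g => ?_⟩
  obtain ⟨w, t, h⟩ := hφ hZ' g
  exact exists_toLeftApproxTarget_comp_eq φ g w t h

end

end CategoryTheory.Arrow

section PreadditiveCoyoneda

variable {C : Type w} [Category.{v} C] [Preadditive C]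

theorem preadditiveCoyoneda_obj_hom_ext {A : C} {F : C ⥤ AddCommGrpCat.{v}}
    {σ τ : preadditiveCoyoneda.obj (op A) ⟶ F}
    (h : σ.app A (𝟙 A : A ⟶ A) = τ.app A (𝟙 A : A ⟶ A)) : σ = τ := by
  ext Y f
  have hf : (preadditiveCoyoneda.obj (op A)).map (f : A ⟶ Y) (𝟙 A : A ⟶ A) = f :=
    Category.id_comp (f : A ⟶ Y)
  rw [← hf]
  refine (NatTrans.naturality_apply σ _ _).trans ?_
  rw [h]
  exact (NatTrans.naturality_apply τ _ _).symm

theorem preadditiveCoyoneda_map_comp_app_apply {A B Y : C} {F : C ⥤ AddCommGrpCat.{v}}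
    (f : A ⟶ B) (σ : preadditiveCoyoneda.obj (op A) ⟶ F) (s : B ⟶ Y) :
    (preadditiveCoyoneda.map f.op ≫ σ).app Y s = σ.app Y (f ≫ s) :=
  rfl

theorem exists_cokernel_π_preadditiveCoyoneda_app_eq {A B Y : C} (f : A ⟶ B)
    (y : (cokernel (preadditiveCoyoneda.map f.op)).obj Y) :
    ∃ s : A ⟶ Y, (cokernel.π (preadditiveCoyoneda.map f.op)).app Y s = y := by
  obtain ⟨s, hs⟩ := (AddCommGrpCat.epi_iff_surjective
    ((cokernel.π (preadditiveCoyoneda.map f.op)).app Y)).1 inferInstance y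
  exact ⟨s, hs⟩

theorem cokernel_π_preadditiveCoyoneda_app_eq_zero_iff {A B Y : C} (f : A ⟶ B) (s : A ⟶ Y) :
    (cokernel.π (preadditiveCoyoneda.map f.op)).app Y s = 0 ↔ ∃ t : B ⟶ Y, f ≫ t = s := by
  let S := ShortComplex.mk _ _ (cokernel.condition (preadditiveCoyoneda.map f.op))
  have hS : (S.map ((evaluation C _).obj Y)).Exact :=
    (S.exact_of_g_is_cokernel (cokernelIsCokernel _)).map _
  rw [ShortComplex.ab_exact_iff] at hS
  constructor
  · exact hS s
  · rintro ⟨t, rfl⟩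
    exact congr($(cokernel.condition (preadditiveCoyoneda.map f.op)).app Y t)

end PreadditiveCoyoneda

section PhiOp

variable {C : Type w} [Category.{v} C] [Preadditive C]

/-- `Φᵒᵖ` on morphisms, over any preadditive category; on objects `PhiOpObj X` is by definition
`cokernel (preadditiveCoyoneda.map X.hom.op)`. -/
noncomputable def phiOpMap {X Y : Arrow C} (g : X ⟶ Y) :
    cokernel (preadditiveCoyoneda.map Y.hom.op) ⟶ cokernel (preadditiveCoyoneda.map X.hom.op) :=
  cokernel.desc _ (preadditiveCoyoneda.map g.left.op ≫ cokernel.π _) (by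
    rw [← Category.assoc, ← Functor.map_comp, ← op_comp, Arrow.w g, op_comp, Functor.map_comp,
      Category.assoc, cokernel.condition, comp_zero])

theorem π_phiOpMap {X Y : Arrow C} (g : X ⟶ Y) :
    cokernel.π _ ≫ phiOpMap g = preadditiveCoyoneda.map g.left.op ≫ cokernel.π _ :=
  cokernel.π_desc _ _ _

theorem phiOpMap_comp {X Y Z : Arrow C} (f : X ⟶ Y) (g : Y ⟶ Z) :
    phiOpMap (f ≫ g) = phiOpMap g ≫ phiOpMap f := by
  apply coequalizer.hom_ext
  rw [π_phiOpMap, ← Category.assoc, π_phiOpMap, Category.assoc, π_phiOpMap, ← Category.assoc,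
    ← Functor.map_comp, Arrow.comp_left, op_comp]

theorem exists_phiOpMap_eq {X Z : Arrow C}
    (α : cokernel (preadditiveCoyoneda.map Z.hom.op) ⟶
      cokernel (preadditiveCoyoneda.map X.hom.op)) :
    ∃ φ : X ⟶ Z, phiOpMap φ = α := by
  obtain ⟨h₁, hπh₁⟩ := exists_cokernel_π_preadditiveCoyoneda_app_eq X.hom
    ((cokernel.π _ ≫ α).app Z.left (𝟙 Z.left : Z.left ⟶ Z.left))
  have hβ : preadditiveCoyoneda.map h₁.op ≫ cokernel.π _ = cokernel.π _ ≫ α := by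
    apply preadditiveCoyoneda_obj_hom_ext
    rw [preadditiveCoyoneda_map_comp_app_apply, Category.comp_id]
    exact hπh₁
  have hz : (cokernel.π (preadditiveCoyoneda.map X.hom.op)).app Z.right (h₁ ≫ Z.hom) = 0 := by
    have hβZ := congr(($hβ).app Z.right (Z.hom : Z.left ⟶ Z.right))
    rw [preadditiveCoyoneda_map_comp_app_apply] at hβZ
    have hZ : (cokernel.π (preadditiveCoyoneda.map Z.hom.op)).app Z.right Z.hom = 0 :=
      (cokernel_π_preadditiveCoyoneda_app_eq_zero_iff _ _).2 ⟨𝟙 _, Category.comp_id _⟩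
    rw [hβZ]
    exact (congrArg (α.app Z.right) hZ).trans (map_zero _)
  obtain ⟨h₀, hsq⟩ := (cokernel_π_preadditiveCoyoneda_app_eq_zero_iff _ _).1 hz
  refine ⟨Arrow.homMk h₁ h₀ hsq.symm, coequalizer.hom_ext ?_⟩
  exact (π_phiOpMap _).trans hβ

theorem exists_left_eq_add_of_phiOpMap_eq {X Y : Arrow C} {g g' : X ⟶ Y}
    (h : phiOpMap g = phiOpMap g') : ∃ t : X.right ⟶ Y.left, g.left = g'.left + X.hom ≫ t := by
  have e := congr((cokernel.π _ ≫ $h).app Y.left (𝟙 Y.left : Y.left ⟶ Y.left))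
  rw [π_phiOpMap, π_phiOpMap, preadditiveCoyoneda_map_comp_app_apply,
    preadditiveCoyoneda_map_comp_app_apply, Category.comp_id, Category.comp_id] at e
  obtain ⟨t, ht⟩ := (cokernel_π_preadditiveCoyoneda_app_eq_zero_iff X.hom (g.left - g'.left)).1
    ((map_sub _ (g.left : X.left ⟶ Y.left) g'.left).trans (sub_eq_zero.2 e))
  exact ⟨t, by rw [ht, add_sub_cancel]⟩

end PhiOp

theorem isFinitelyPresentedCovariantFunctor_phiOpObj {Λ : Type u} [Ring Λ]
    (X : Arrow (FGModuleCat Λ)) : IsFinitelyPresentedCovariantFunctor (PhiOpObj X) :=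
  ⟨X.left, X.right, X.hom, cokernel.π _, cokernel.condition _, inferInstanceAs (Epi (cokernel.π _)),
    ShortComplex.exact_of_g_is_cokernel _ (cokernelIsCokernel _)⟩

instance {Λ : Type u} [Ring Λ] : HasBinaryBiproducts (FGModuleCat.{u} Λ) :=
  .of_hasBinaryCoproducts

instance {Λ : Type u} [Ring Λ] : HasZeroObject (FGModuleCat.{u} Λ) :=
  hasZeroObject_of_hasInitial_object

theorem covariantlyFinite_of_phiOpImage_contravariantlyFinite_general
    {Λ : Type u} [Ring Λ]
    (𝒞 : Set (Arrow (FGModuleCat Λ)))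
    (hsum : ClosedUnderDirectSums 𝒞)
    (hzero : ∀ (M Z : FGModuleCat Λ), IsZero Z → Arrow.mk (0 : Z ⟶ M) ∈ 𝒞)
    (hid : ∀ M : FGModuleCat Λ, Arrow.mk (𝟙 M) ∈ 𝒞)
    (hcf : ∀ G : FGModuleCat Λ ⥤ AddCommGrpCat.{u}, IsFinitelyPresentedCovariantFunctor G →
      HasRightApproximation (PhiOpImage 𝒞) G) :
    ∀ M : Arrow (FGModuleCat Λ), HasLeftApproximation 𝒞 M := by
  intro X
  obtain ⟨G, ρ, ⟨Z, hZ, ⟨e⟩⟩, hρ⟩ := hcf _ (isFinitelyPresentedCovariantFunctor_phiOpObj X)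
  obtain ⟨φ, hφ⟩ := exists_phiOpMap_eq (e.hom ≫ ρ)
  refine ⟨_, _, Arrow.isLeftApproximation_toLeftApproxTarget hsum hzero hid hZ φ ?_⟩
  intro Z' hZ' g
  obtain ⟨ν, hν⟩ := hρ ⟨Z', hZ', ⟨Iso.refl _⟩⟩ (phiOpMap g)
  obtain ⟨w, hw⟩ := exists_phiOpMap_eq (ν ≫ e.inv)
  have hνρ : (ν ≫ e.inv) ≫ e.hom ≫ ρ = ν ≫ ρ := by simp
  obtain ⟨t, ht⟩ := exists_left_eq_add_of_phiOpMap_eq (g := g) (g' := φ ≫ w) (by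
    rw [phiOpMap_comp, hw, hφ]
    exact (hνρ.trans hν).symm)
  exact ⟨w, t, ht⟩

/-- Let `Λ` be an artin algebra and `𝒞` a full subcategory of
`maps (mod Λ)`, closed under isomorphisms and finite direct sums, containing all objects
`(0 → M)` and `(1_M : M → M)`.  If `Φᵒᵖ(𝒞)` is contravariantly finite in
`mod ((mod Λ)ᵒᵖ)`, then `𝒞` is covariantly finite in `maps (mod Λ)`. -/
theorem covariantlyFinite_of_phiOpImage_contravariantlyFinite
    {R : Type u} [CommRing R] [IsArtinianRing R]
    {Λ : Type u} [Ring Λ] [Algebra R Λ] [Module.Finite R Λ]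
    (𝒞 : Set (Arrow (FGModuleCat Λ)))
    (hiso : ∀ ⦃X Y : Arrow (FGModuleCat Λ)⦄, (X ≅ Y) → X ∈ 𝒞 → Y ∈ 𝒞)
    (hsum : ClosedUnderDirectSums 𝒞)
    (hzero : ∀ (M Z : FGModuleCat Λ), IsZero Z → Arrow.mk (0 : Z ⟶ M) ∈ 𝒞)
    (hid : ∀ M : FGModuleCat Λ, Arrow.mk (𝟙 M) ∈ 𝒞)
    (hcf : ∀ G : FGModuleCat Λ ⥤ AddCommGrpCat.{u}, IsFinitelyPresentedCovariantFunctor G →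
      HasRightApproximation (PhiOpImage 𝒞) G) :
    ∀ M : Arrow (FGModuleCat Λ), HasLeftApproximation 𝒞 M :=
  covariantlyFinite_of_phiOpImage_contravariantlyFinite_general 𝒞 hsum hzero hid hcf
end

section
/- Let Λ be an artin algebra and let f : M₁ → M₂ be a morphism in mod Λ. Then the morphism in maps(mod Λ) from (f' : M₁ → Im f) to (f : M₁ → M₂) with components 1_{M₁} and the inclusion j : Im f → M₂ (where f = j ∘ f' is the image factorization) is a right epimaps(mod Λ)-approximation of f. Consequently epimaps(mod Λ) is contravariantly finite in maps(mod Λ). -/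
open CategoryTheory CategoryTheory.Limits

universe u

/-- The full subcategory of `maps (mod Λ)` consisting of the epimorphisms. -/
def Epimaps (Λ : Type u) [Ring Λ] : Set (Arrow (FGModuleCat Λ)) :=
  {a | Function.Surjective ⇑a.hom}

/-!
An arrow `a : A ↠ B` of `epimaps` mapping to `f` lands, on the codomain side, inside `Im f`,
because `B` is covered by `A` and `A` maps to `M₂` through `Im f`. Hence the square formed by
`a`, the inclusion `j : Im f ↪ M₂` and the components of the map admits a diagonal filler
`B → Im f`: surjections have the left lifting property against injections.
-/

namespace LinearMap

variable {R A B I M : Type*} [Ring R] [AddCommGroup A] [AddCommGroup B] [AddCommGroup I]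
  [AddCommGroup M] [Module R A] [Module R B] [Module R I] [Module R M]

theorem exists_diagonal_of_surjective_of_injective {g : A →ₗ[R] B} {j : I →ₗ[R] M}
    (hg : Function.Surjective g) (hj : Function.Injective j) {a : A →ₗ[R] I} {b : B →ₗ[R] M}
    (h : j ∘ₗ a = b ∘ₗ g) : ∃ l : B →ₗ[R] I, l ∘ₗ g = a ∧ j ∘ₗ l = b := by
  have hb : range b ≤ range j := by
    rw [← range_comp_of_range_eq_top b (range_eq_top.2 hg), ← h]
    exact range_comp_le_range a j
  obtain ⟨l, hjl⟩ : ∃ l : B →ₗ[R] I, j ∘ₗ l = b :=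
    ⟨(LinearEquiv.ofInjective j hj).symm.toLinearMap ∘ₗ
      b.codRestrict (range j) fun c => hb (mem_range_self b c),
      ext fun c => LinearEquiv.ofInjective_symm_apply (f := j) (h := hj) _⟩
  refine ⟨l, ext fun x => hj ?_, hjl⟩
  simpa using (DFunLike.congr_fun hjl (g x)).trans (DFunLike.congr_fun h x).symm

end LinearMap

theorem FGModuleCat.hasLiftingProperty_of_surjective_of_injective {Λ : Type u} [Ring Λ]
    {A B I M : FGModuleCat Λ} {g : A ⟶ B} {j : I ⟶ M} (hg : Function.Surjective g)
    (hj : Function.Injective j) : HasLiftingProperty g j where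
  sq_hasLift {a b} sq := by
    obtain ⟨l, hlg, hjl⟩ := LinearMap.exists_diagonal_of_surjective_of_injective
      (g := g.hom.hom) (j := j.hom.hom) (a := a.hom.hom) (b := b.hom.hom) hg hj
      (by ext x; exact ConcreteCategory.congr_hom sq.w x)
    exact ⟨⟨{ l := ConcreteCategory.ofHom l
              fac_left := by ext x; exact LinearMap.congr_fun hlg x
              fac_right := by ext x; exact LinearMap.congr_fun hjl x }⟩⟩

theorem isRightApproximation_of_hasLiftingProperty {C : Type*} [Category C]
    {𝒳 : Set (Arrow C)} {X Y I : C} {f : X ⟶ Y} {f' : X ⟶ I} {j : I ⟶ Y} (hf : f' ≫ j = f)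
    (hf' : Arrow.mk f' ∈ 𝒳) (hlift : ∀ a ∈ 𝒳, HasLiftingProperty a.hom j) :
    IsRightApproximation 𝒳 (Arrow.homMk (u := 𝟙 X) (v := j) (by simp [hf]) :
      Arrow.mk f' ⟶ Arrow.mk f) := by
  refine ⟨hf', fun a ha u => ?_⟩
  have := hlift a ha
  have sq : CommSq (u.left ≫ f') a.hom j u.right := ⟨by rw [Category.assoc, hf]; exact u.w⟩
  exact ⟨Arrow.homMk (u := u.left) (v := sq.lift) sq.fac_left.symm, by ext <;> simp⟩

theorem isRightApproximation_epimaps {Λ : Type u} [Ring Λ]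
    {M₁ M₂ I : FGModuleCat Λ} {f : M₁ ⟶ M₂} {f' : M₁ ⟶ I} {j : I ⟶ M₂}
    (hf' : Function.Surjective f') (hj : Function.Injective j) (hf : f' ≫ j = f) :
    IsRightApproximation (Epimaps Λ) (Arrow.homMk (u := 𝟙 M₁) (v := j) (by simp [hf]) :
      Arrow.mk f' ⟶ Arrow.mk f) :=
  isRightApproximation_of_hasLiftingProperty hf hf' fun _ ha =>
    FGModuleCat.hasLiftingProperty_of_surjective_of_injective ha hj

theorem hasRightApproximation_epimaps {Λ : Type u} [Ring Λ] (a : Arrow (FGModuleCat Λ)) :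
    HasRightApproximation (Epimaps Λ) a := by
  let g : a.left →ₗ[Λ] a.right := a.hom.hom.hom
  let f' : a.left ⟶ FGModuleCat.of Λ (LinearMap.range g) := ConcreteCategory.ofHom g.rangeRestrict
  let j : FGModuleCat.of Λ (LinearMap.range g) ⟶ a.right :=
    ConcreteCategory.ofHom (LinearMap.range g).subtype
  exact ⟨_, _, isRightApproximation_epimaps (f := a.hom) (f' := f') (j := j)
    g.surjective_rangeRestrict (Submodule.injective_subtype _) rfl⟩

/-- Let `Λ` be an artin algebra and `f : M₁ → M₂` in `mod Λ`, with
image factorization `f = j ∘ f'`, `f' : M₁ ↠ Im f`, `j : Im f ↪ M₂`.  The morphism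
`(1_{M₁}, j) : (f' : M₁ → Im f) ⟶ (f : M₁ → M₂)` in `maps (mod Λ)` is a right
`epimaps (mod Λ)`-approximation of `f`; consequently `epimaps (mod Λ)` is
contravariantly finite in `maps (mod Λ)`. -/
theorem epimaps_rightApproximation
    {Λ : Type u} [Ring Λ]
    {M₁ M₂ I : FGModuleCat Λ} (f : M₁ ⟶ M₂) (f' : M₁ ⟶ I) (j : I ⟶ M₂)
    (hf' : Function.Surjective ⇑f') (hj : Function.Injective ⇑j) (hfac : f' ≫ j = f) :
    IsRightApproximation (Epimaps Λ) (Z := Arrow.mk f') (M := Arrow.mk f)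
      (Arrow.homMk (u := 𝟙 M₁) (v := j) (by simp [hfac])) ∧
    ∀ a : Arrow (FGModuleCat Λ), HasRightApproximation (Epimaps Λ) a :=
  ⟨isRightApproximation_epimaps hf' hj hfac, hasRightApproximation_epimaps⟩
end

section
/- Let Λ be an artin algebra. Then the full subcategory mod(Λ)⁰ of mod(mod Λ), consisting of the finitely presented functors F : (mod Λ)^op → Ab with F(P) = 0 for every projective module P in mod Λ, is functorially finite in mod(mod Λ). -/
/-!
Write `F = Coker ((−, M₁) ⟶ (−, M₀))` for `f : M₁ ⟶ M₀`. A functor presented by a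
surjection vanishes on projectives, since every map from a projective to `M₀` factors through
the surjection. A functor `Z` with `Z(Λ) = 0` admits no nonzero map to a representable
`(−, N)`: a value `τ_X(z) : X ⟶ N` is tested on the maps `Λ ⟶ X`, and by naturality these go
through `Z(Λ) = 0`. By Yoneda, a functor with `Z(P) = 0` admits no nonzero map from `(−, P)`.

So the kernel of the induced map `F ⟶ (−, Coker f)` is a right `mod(Λ)⁰`-approximation of
`F`; it is presented by the surjection `M₁ ↠ Im f`. For a projective `P ↠ M₀`, the cokernel
of `(−, P) ⟶ F` is a left approximation, presented by the surjection `M₁ ⊕ P ↠ M₀`.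
-/

open CategoryTheory CategoryTheory.Limits Opposite

universe u

/-- The subcategory `mod(Λ)⁰` of `mod (mod Λ)`: finitely presented functors vanishing on
all projective modules. -/
def VanishingOnProjectives (Λ : Type u) [Ring Λ] :
    Set ((FGModuleCat Λ)ᵒᵖ ⥤ AddCommGrpCat.{u}) :=
  {F | IsFinitelyPresentedFunctor F ∧
    ∀ P : FGModuleCat Λ, Module.Projective Λ P → IsZero (F.obj (op P))}

section FunctorsToAddCommGrp

variable {J : Type*} [Category J]

theorem CategoryTheory.ShortComplex.exact_iff_forall_app
    (S : ShortComplex (J ⥤ AddCommGrpCat.{u})) :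
    S.Exact ↔ ∀ X (x : S.X₂.obj X), S.g.app X x = 0 → ∃ y, S.f.app X y = x := by
  refine ⟨fun h X => (S.map ((evaluation J _).obj X)).ab_exact_iff.1 (h.map _), fun h => ?_⟩
  rw [S.exact_iff_isZero_homology]
  refine Functor.isZero _ fun X => ?_
  exact ((S.map ((evaluation J _).obj X)).exact_iff_isZero_homology.1
    ((ShortComplex.ab_exact_iff _).2 (h X))).of_iso
      (S.mapHomologyIso ((evaluation J _).obj X)).symm

variable {F G : J ⥤ AddCommGrpCat.{u}}

theorem cokernel_π_app_eq_zero_iff (α : F ⟶ G) {X : J} (y : G.obj X) :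
    (cokernel.π α).app X y = 0 ↔ ∃ z, α.app X z = y := by
  refine ⟨(ShortComplex.exact_iff_forall_app _).1 (ShortComplex.exact_cokernel α) X y, ?_⟩
  rintro ⟨z, rfl⟩
  exact congr($(cokernel.condition α).app X z)

theorem NatTrans.app_injective (φ : F ⟶ G) [Mono φ] (X : J) : Function.Injective (φ.app X) :=
  (AddCommGrpCat.mono_iff_injective _).1 ((NatTrans.mono_iff_mono_app φ).1 ‹_› X)

theorem NatTrans.app_surjective (φ : F ⟶ G) [Epi φ] (X : J) : Function.Surjective (φ.app X) :=
  (AddCommGrpCat.epi_iff_surjective _).1 ((NatTrans.epi_iff_epi_app φ).1 ‹_› X)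

end FunctorsToAddCommGrp

theorem AddCommGrpCat.eq_zero_of_isZero {A : AddCommGrpCat.{u}} (hA : IsZero A) (x : A) :
    x = 0 :=
  (AddCommGrpCat.subsingleton_of_isZero hA).elim x 0

section Preadditive

variable {C : Type*} [Category.{u} C] [Preadditive C] {Z : Cᵒᵖ ⥤ AddCommGrpCat.{u}} {M : C}

theorem preadditiveYoneda_app_add (τ : preadditiveYoneda.obj M ⟶ Z) {X : Cᵒᵖ}
    (a b : unop X ⟶ M) : τ.app X (a + b) = τ.app X a + τ.app X b :=
  map_add (τ.app X).hom a b

theorem preadditiveYoneda_app_sub (τ : preadditiveYoneda.obj M ⟶ Z) {X : Cᵒᵖ}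
    (a b : unop X ⟶ M) : τ.app X (a - b) = τ.app X a - τ.app X b :=
  map_sub (τ.app X).hom a b

theorem preadditiveYoneda_hom_eq_zero_of_isZero (hZ : IsZero (Z.obj (op M)))
    (τ : preadditiveYoneda.obj M ⟶ Z) : τ = 0 := by
  ext ⟨X⟩ (g : X ⟶ M)
  have h : τ.app (op X) (g ≫ 𝟙 M) = Z.map g.op (τ.app (op M) (𝟙 M)) :=
    NatTrans.naturality_apply τ g.op (𝟙 M)
  rwa [Category.comp_id, AddCommGrpCat.eq_zero_of_isZero hZ (τ.app (op M) (𝟙 M)), map_zero] at h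

end Preadditive

section FGModuleFunctors

variable {Λ : Type u} [Ring Λ]

instance : HasBinaryBiproducts (FGModuleCat Λ) :=
  HasBinaryBiproducts.of_hasBinaryCoproducts

structure YonedaPresentation (F : (FGModuleCat Λ)ᵒᵖ ⥤ AddCommGrpCat.{u}) where
  M₁ : FGModuleCat Λ
  M₀ : FGModuleCat Λ
  f : M₁ ⟶ M₀
  p : preadditiveYoneda.obj M₀ ⟶ F
  surjective_app : ∀ X, Function.Surjective (p.app X)
  app_eq_zero_iff : ∀ X (h : unop X ⟶ M₀), p.app X h = 0 ↔ ∃ k : unop X ⟶ M₁, k ≫ f = h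

theorem hom_preadditiveYoneda_eq_zero_of_isZero_regular
    {Z : (FGModuleCat Λ)ᵒᵖ ⥤ AddCommGrpCat.{u}} (hZ : IsZero (Z.obj (op (FGModuleCat.of Λ Λ))))
    {N : FGModuleCat Λ} (τ : Z ⟶ preadditiveYoneda.obj N) : τ = 0 := by
  ext ⟨X⟩ z
  refine FGModuleCat.hom_ext (LinearMap.ext fun m => ?_)
  let e := FGModuleCat.ofHom (LinearMap.toSpanSingleton Λ X m)
  have h : τ.app (op (.of Λ Λ)) (Z.map e.op z) = e ≫ τ.app (op X) z :=
    NatTrans.naturality_apply τ e.op z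
  rw [AddCommGrpCat.eq_zero_of_isZero hZ (Z.map e.op z), map_zero] at h
  have h1 : (τ.app (op X) z : X ⟶ N).hom.hom m = (e ≫ τ.app (op X) z).hom.hom 1 := by
    change _ = (τ.app (op X) z : X ⟶ N).hom.hom ((1 : Λ) • m)
    rw [one_smul]
  rw [h1, ← h]
  rfl

namespace YonedaPresentation

variable {F : (FGModuleCat Λ)ᵒᵖ ⥤ AddCommGrpCat.{u}} (P : YonedaPresentation F)

theorem app_comp_f_eq_zero {X : (FGModuleCat Λ)ᵒᵖ} (k : unop X ⟶ P.M₁) :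
    P.p.app X (k ≫ P.f) = 0 :=
  (P.app_eq_zero_iff X _).2 ⟨k, rfl⟩

theorem w : preadditiveYoneda.map P.f ≫ P.p = 0 := by
  ext X k
  exact P.app_comp_f_eq_zero k

instance epi_p : Epi P.p :=
  (NatTrans.epi_iff_epi_app _).2 fun X =>
    (AddCommGrpCat.epi_iff_surjective _).2 (P.surjective_app X)

theorem exact : (ShortComplex.mk (preadditiveYoneda.map P.f) P.p P.w).Exact :=
  (ShortComplex.exact_iff_forall_app _).2 fun X h hh => (P.app_eq_zero_iff X h).1 hh

theorem mem_vanishingOnProjectives (hf : Function.Surjective P.f.hom.hom) :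
    F ∈ VanishingOnProjectives Λ := by
  refine ⟨⟨P.M₁, P.M₀, P.f, P.p, P.w, P.epi_p, P.exact⟩, fun Q _ => ?_⟩
  have : Subsingleton (F.obj (op Q)) := subsingleton_of_forall_eq 0 fun x => by
    obtain ⟨h, rfl⟩ := P.surjective_app (op Q) x
    obtain ⟨k, hk⟩ := Module.projective_lifting_property P.f.hom.hom h.hom.hom hf
    rw [← show FGModuleCat.ofHom k ≫ P.f = h from FGModuleCat.hom_ext hk]
    exact P.app_comp_f_eq_zero _
  exact AddCommGrpCat.isZero_of_subsingleton _

end YonedaPresentation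

theorem isFinitelyPresentedFunctor_iff {F : (FGModuleCat Λ)ᵒᵖ ⥤ AddCommGrpCat.{u}} :
    IsFinitelyPresentedFunctor F ↔ Nonempty (YonedaPresentation F) := by
  refine ⟨?_, fun ⟨P⟩ => ⟨P.M₁, P.M₀, P.f, P.p, P.w, P.epi_p, P.exact⟩⟩
  rintro ⟨M₁, M₀, f, p, w, hp, hex⟩
  refine ⟨⟨M₁, M₀, f, p, NatTrans.app_surjective p, fun X h => ⟨?_, ?_⟩⟩⟩
  · exact (ShortComplex.exact_iff_forall_app _).1 hex X h
  · rintro ⟨k, rfl⟩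
    exact congr(($w).app X k)

namespace YonedaPresentation

variable {F : (FGModuleCat Λ)ᵒᵖ ⥤ AddCommGrpCat.{u}} (P : YonedaPresentation F)

abbrev image : FGModuleCat Λ := .of Λ (LinearMap.range P.f.hom.hom)

def imageι : P.image ⟶ P.M₀ := FGModuleCat.ofHom (LinearMap.range P.f.hom.hom).subtype

def factorThruImage : P.M₁ ⟶ P.image := FGModuleCat.ofHom P.f.hom.hom.rangeRestrict

instance : Mono P.imageι :=
  ⟨fun _ _ h => FGModuleCat.hom_ext <| LinearMap.ext fun a => Subtype.ext congr(($h).hom.hom a)⟩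

theorem factorThruImage_imageι : P.factorThruImage ≫ P.imageι = P.f := rfl

abbrev coker : FGModuleCat Λ := .of Λ (P.M₀ ⧸ LinearMap.range P.f.hom.hom)

def cokerπ : P.M₀ ⟶ P.coker := FGModuleCat.ofHom (LinearMap.range P.f.hom.hom).mkQ

theorem imageι_cokerπ : P.imageι ≫ P.cokerπ = 0 :=
  FGModuleCat.hom_ext <| LinearMap.ext fun d => (Submodule.Quotient.mk_eq_zero _).2 d.2

theorem f_cokerπ : P.f ≫ P.cokerπ = 0 := by
  rw [← P.factorThruImage_imageι, Category.assoc, P.imageι_cokerπ, comp_zero]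

noncomputable def toYonedaCoker : F ⟶ preadditiveYoneda.obj P.coker :=
  P.exact.gIsCokernel.desc (CokernelCofork.ofπ (preadditiveYoneda.map P.cokerπ)
    (by rw [← Functor.map_comp, P.f_cokerπ, Functor.map_zero]))

theorem p_toYonedaCoker : P.p ≫ P.toYonedaCoker = preadditiveYoneda.map P.cokerπ :=
  Cofork.IsColimit.π_desc P.exact.gIsCokernel

theorem toYonedaCoker_app_p {X : (FGModuleCat Λ)ᵒᵖ} (h : unop X ⟶ P.M₀) :
    P.toYonedaCoker.app X (P.p.app X h) = h ≫ P.cokerπ :=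
  congr(($P.p_toYonedaCoker).app X h)

theorem toYonedaCoker_app_eq_zero_iff {X : (FGModuleCat Λ)ᵒᵖ} (x : F.obj X) :
    P.toYonedaCoker.app X x = 0 ↔ ∃ d : unop X ⟶ P.image, P.p.app X (d ≫ P.imageι) = x := by
  constructor
  · obtain ⟨h : unop X ⟶ P.M₀, rfl⟩ := P.surjective_app X x
    rw [toYonedaCoker_app_p]
    intro hh
    have hmem : ∀ a, h.hom.hom a ∈ LinearMap.range P.f.hom.hom := fun a =>
      (Submodule.Quotient.mk_eq_zero _).1 congr(($hh).hom.hom a)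
    exact ⟨FGModuleCat.ofHom (h.hom.hom.codRestrict _ hmem), rfl⟩
  · rintro ⟨d, rfl⟩
    rw [toYonedaCoker_app_p, Category.assoc, imageι_cokerπ, comp_zero]
    rfl

theorem imageι_p_toYonedaCoker :
    (preadditiveYoneda.map P.imageι ≫ P.p) ≫ P.toYonedaCoker = 0 := by
  rw [Category.assoc, p_toYonedaCoker, ← Functor.map_comp, imageι_cokerπ, Functor.map_zero]

theorem kernel_ι_app_lift {X : (FGModuleCat Λ)ᵒᵖ} (d : unop X ⟶ P.image) :
    (kernel.ι P.toYonedaCoker).app X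
      ((kernel.lift P.toYonedaCoker _ P.imageι_p_toYonedaCoker).app X d) =
      P.p.app X (d ≫ P.imageι) :=
  congr(($(kernel.lift_ι P.toYonedaCoker _ P.imageι_p_toYonedaCoker)).app X d)

noncomputable def kernelPresentation : YonedaPresentation (kernel P.toYonedaCoker) where
  M₁ := P.M₁
  M₀ := P.image
  f := P.factorThruImage
  p := kernel.lift P.toYonedaCoker _ P.imageι_p_toYonedaCoker
  surjective_app X x := by
    obtain ⟨d, hd⟩ := (P.toYonedaCoker_app_eq_zero_iff _).1
      congr(($(kernel.condition P.toYonedaCoker)).app X x)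
    exact ⟨d, NatTrans.app_injective (kernel.ι _) X ((P.kernel_ι_app_lift d).trans hd)⟩
  app_eq_zero_iff X d := by
    rw [← map_eq_zero_iff _ (NatTrans.app_injective (kernel.ι _) X), kernel_ι_app_lift,
      P.app_eq_zero_iff]
    simp_rw [← P.factorThruImage_imageι, ← Category.assoc, cancel_mono]

theorem isRightApproximation_kernel_ι :
    IsRightApproximation (VanishingOnProjectives Λ) (kernel.ι P.toYonedaCoker) := by
  refine ⟨P.kernelPresentation.mem_vanishingOnProjectives
    (LinearMap.surjective_rangeRestrict P.f.hom.hom :), fun Z hZ u => ?_⟩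
  have hu : u ≫ P.toYonedaCoker = 0 :=
    hom_preadditiveYoneda_eq_zero_of_isZero_regular (hZ.2 _ inferInstance) _
  exact ⟨kernel.lift _ u hu, kernel.lift_ι _ u hu⟩

variable {Q : FGModuleCat Λ} (π : Q ⟶ P.M₀)

theorem app_comp_biprod_desc {X : (FGModuleCat Λ)ᵒᵖ} (m : unop X ⟶ P.M₁ ⊞ Q) :
    P.p.app X (m ≫ biprod.desc P.f π) = P.p.app X ((m ≫ biprod.snd) ≫ π) := by
  rw [biprod.desc_eq, Preadditive.comp_add, ← Category.assoc, ← Category.assoc,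
    preadditiveYoneda_app_add, app_comp_f_eq_zero, zero_add]

noncomputable def cokernelPresentation :
    YonedaPresentation (cokernel (preadditiveYoneda.map π ≫ P.p)) where
  M₁ := P.M₁ ⊞ Q
  M₀ := P.M₀
  f := biprod.desc P.f π
  p := P.p ≫ cokernel.π _
  surjective_app X := (NatTrans.app_surjective (cokernel.π _) X).comp (P.surjective_app X)
  app_eq_zero_iff X h := by
    change (cokernel.π (preadditiveYoneda.map π ≫ P.p)).app X (P.p.app X h) = 0 ↔ _
    rw [cokernel_π_app_eq_zero_iff]
    constructor
    · rintro ⟨z : unop X ⟶ Q, hz⟩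
      obtain ⟨k, hk⟩ := (P.app_eq_zero_iff X (h - z ≫ π)).1 <| by
        rw [preadditiveYoneda_app_sub, sub_eq_zero]
        exact hz.symm
      exact ⟨biprod.lift k z, by rw [biprod.lift_desc, hk, sub_add_cancel]⟩
    · rintro ⟨m, rfl⟩
      exact ⟨m ≫ biprod.snd, (P.app_comp_biprod_desc π m).symm⟩

theorem isLeftApproximation_cokernel_π [Module.Projective Λ Q]
    (hπ : Function.Surjective π.hom.hom) :
    IsLeftApproximation (VanishingOnProjectives Λ)
      (cokernel.π (preadditiveYoneda.map π ≫ P.p)) := by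
  refine ⟨(P.cokernelPresentation π).mem_vanishingOnProjectives fun y => ?_, fun Z hZ u => ?_⟩
  · obtain ⟨q, rfl⟩ := hπ y
    exact ⟨(biprod.inr : Q ⟶ P.M₁ ⊞ Q).hom.hom q,
      congr(($(biprod.inr_desc P.f π)).hom.hom q)⟩
  · have hu : (preadditiveYoneda.map π ≫ P.p) ≫ u = 0 :=
      preadditiveYoneda_hom_eq_zero_of_isZero (hZ.2 Q ‹_›) _
    exact ⟨cokernel.desc _ u hu, cokernel.π_desc _ u hu⟩

end YonedaPresentation

end FGModuleFunctors

theorem vanishingOnProjectives_functoriallyFinite_general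
    {Λ : Type u} [Ring Λ] :
    ∀ F : (FGModuleCat Λ)ᵒᵖ ⥤ AddCommGrpCat.{u}, IsFinitelyPresentedFunctor F →
      HasRightApproximation (VanishingOnProjectives Λ) F ∧
      HasLeftApproximation (VanishingOnProjectives Λ) F := by
  intro F hF
  obtain ⟨P⟩ := isFinitelyPresentedFunctor_iff.1 hF
  obtain ⟨n, π, hπ⟩ := Module.Finite.exists_fin' Λ P.M₀
  let π' : FGModuleCat.of Λ (Fin n → Λ) ⟶ P.M₀ := FGModuleCat.ofHom π
  exact ⟨⟨_, _, P.isRightApproximation_kernel_ι⟩, ⟨_, _, P.isLeftApproximation_cokernel_π π' hπ⟩⟩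

/-- Let `Λ` be an artin algebra.  The full subcategory `mod(Λ)⁰` of
`mod (mod Λ)` consisting of the finitely presented functors vanishing on projectives is
functorially finite in `mod (mod Λ)`. -/
theorem vanishingOnProjectives_functoriallyFinite
    {R : Type u} [CommRing R] [IsArtinianRing R]
    {Λ : Type u} [Ring Λ] [Algebra R Λ] [Module.Finite R Λ] :
    ∀ F : (FGModuleCat Λ)ᵒᵖ ⥤ AddCommGrpCat.{u}, IsFinitelyPresentedFunctor F →
      HasRightApproximation (VanishingOnProjectives Λ) F ∧
      HasLeftApproximation (VanishingOnProjectives Λ) F :=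
  vanishingOnProjectives_functoriallyFinite_general
end
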